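/- arXiv:2602.11057 — 2 statements merged into one kernel-verified Lean document; each statement's English description precedes it below -/
import Mathlib

section
/- Let f : ℝ^d → ℝ be convex and ρ-Lipschitz, and let w* minimize f over the ball of radius B. Run the gradient descent iteration w^(t+1) = w^(t) − η·v_t with w^(1) = 0, where v_t is a subgradient of f at w^(t), and set η = B/(ρ·√T). Then the average iterate w̄ = (1/T)·Σ_{t=1}^T w^(t) satisfies f(w̄) − f(w*) ≤ B·ρ/√T. In particular, for any ε > 0, taking T ≥ B²ρ²/ε² guarantees f(w̄) − f(w*) ≤ ε. -/
/-!
Subtracting `u` from the update `w (t+1) = w t - η • v t` and expanding the square gives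
`2η ⟪v t, w t - u⟫ = ‖w t - u‖² - ‖w (t+1) - u‖² + η² ‖v t‖²`, which telescopes to
`∑ ⟪v t, w t - u⟫ ≤ ‖w 1 - u‖² / (2η) + η T ρ² / 2`. The subgradient inequality bounds each
`f (w t) - f u` by `⟪v t, w t - u⟫`, and Jensen moves the average inside `f`. The step
`η = B / (ρ √T)` balances the two terms, each becoming `Bρ √T / 2`.
-/

open RealInnerProductSpace Finset

lemma ConvexOn.map_inv_card_smul_sum_le {E ι : Type*} [AddCommGroup E] [Module ℝ E]
    {f : E → ℝ} (hf : ConvexOn ℝ Set.univ f) {s : Finset ι} (hs : s.Nonempty) (p : ι → E) :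
    f ((#s : ℝ)⁻¹ • ∑ i ∈ s, p i) ≤ (#s : ℝ)⁻¹ * ∑ i ∈ s, f (p i) := by
  have hcard : (#s : ℝ) ≠ 0 := by exact_mod_cast hs.card_pos.ne'
  have := hf.map_sum_le (t := s) (w := fun _ => (#s : ℝ)⁻¹) (p := p)
    (fun _ _ => by positivity) (by simp [hcard]) (fun _ _ => Set.mem_univ _)
  simpa only [← smul_sum, ← mul_sum, smul_eq_mul] using this

section SubgradientDescent

variable {E : Type*} [NormedAddCommGroup E] [InnerProductSpace ℝ E]

def IsSubgradientAt (f : E → ℝ) (x g : E) : Prop :=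
  ∀ u, f x + ⟪g, u - x⟫ ≤ f u

lemma IsSubgradientAt.sub_le_inner {f : E → ℝ} {x g : E} (h : IsSubgradientAt f x g) (u : E) :
    f x - f u ≤ ⟪g, x - u⟫ := by
  have hu := h u
  rw [← neg_sub x u, inner_neg_right] at hu
  linarith

lemma IsSubgradientAt.norm_le {f : E → ℝ} {x g : E} {ρ : ℝ} (h : IsSubgradientAt f x g)
    (hρ : 0 ≤ ρ) (hlip : ∀ y, f y - f x ≤ ρ * ‖y - x‖) : ‖g‖ ≤ ρ := by
  have hstep := h (x + g)
  have hlip' := hlip (x + g)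
  rw [add_sub_cancel_left, real_inner_self_eq_norm_sq] at hstep
  rw [add_sub_cancel_left] at hlip'
  nlinarith [norm_nonneg g]

lemma two_mul_inner_eq_of_gradient_step (x g u : E) (η : ℝ) :
    2 * η * ⟪g, x - u⟫ = ‖x - u‖ ^ 2 - ‖x - η • g - u‖ ^ 2 + η ^ 2 * ‖g‖ ^ 2 := by
  rw [sub_right_comm x, norm_sub_sq_real (x - u), inner_smul_right, norm_smul, mul_pow,
    Real.norm_eq_abs, sq_abs, real_inner_comm]
  ring

variable {η : ℝ} {w v : ℕ → E}

lemma two_mul_sum_inner_eq_of_gradient_descent (hrec : ∀ t, w (t + 1) = w t - η • v t)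
    (u : E) (T : ℕ) :
    2 * η * ∑ t ∈ Icc 1 T, ⟪v t, w t - u⟫ =
      ‖w 1 - u‖ ^ 2 - ‖w (T + 1) - u‖ ^ 2 + η ^ 2 * ∑ t ∈ Icc 1 T, ‖v t‖ ^ 2 := by
  induction T with
  | zero => simp
  | succ T ih =>
    rw [sum_Icc_succ_top (by omega), sum_Icc_succ_top (by omega), mul_add, mul_add, ih,
      two_mul_inner_eq_of_gradient_step, ← hrec]
    ring

lemma sum_inner_le_of_gradient_descent {ρ : ℝ} (hη : 0 < η)
    (hrec : ∀ t, w (t + 1) = w t - η • v t) (hv : ∀ t, ‖v t‖ ≤ ρ) (u : E) (T : ℕ) :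
    ∑ t ∈ Icc 1 T, ⟪v t, w t - u⟫ ≤ ‖w 1 - u‖ ^ 2 / (2 * η) + η * T * ρ ^ 2 / 2 := by
  have hsq : ∑ t ∈ Icc 1 T, ‖v t‖ ^ 2 ≤ T * ρ ^ 2 := by
    calc ∑ t ∈ Icc 1 T, ‖v t‖ ^ 2 ≤ ∑ _t ∈ Icc 1 T, ρ ^ 2 := by
          gcongr with t; exact hv t
      _ = T * ρ ^ 2 := by simp
  have hid := two_mul_sum_inner_eq_of_gradient_descent hrec u T
  have hη2 := mul_le_mul_of_nonneg_left hsq (sq_nonneg η)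
  rw [div_add' _ _ _ (by positivity), le_div_iff₀ (by positivity)]
  linarith [sq_nonneg ‖w (T + 1) - u‖]

lemma sub_le_average_inner_of_isSubgradientAt {f : E → ℝ} (hf : ConvexOn ℝ Set.univ f)
    (hsub : ∀ t, IsSubgradientAt f (w t) (v t)) {T : ℕ} (hT : 1 ≤ T) (u : E) :
    f ((T : ℝ)⁻¹ • ∑ t ∈ Icc 1 T, w t) - f u ≤ (T : ℝ)⁻¹ * ∑ t ∈ Icc 1 T, ⟪v t, w t - u⟫ := by
  have hne : (Icc 1 T).Nonempty := nonempty_Icc.2 hT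
  have hcard : (#(Icc 1 T) : ℝ) = T := by simp
  have hT0 : (0 : ℝ) < T := by exact_mod_cast hT
  have hjensen := hf.map_inv_card_smul_sum_le hne w
  rw [hcard] at hjensen
  have hsum : ∑ t ∈ Icc 1 T, f (w t) - T * f u ≤ ∑ t ∈ Icc 1 T, ⟪v t, w t - u⟫ := by
    calc ∑ t ∈ Icc 1 T, f (w t) - T * f u = ∑ t ∈ Icc 1 T, (f (w t) - f u) := by
          simp [sum_sub_distrib]
      _ ≤ _ := sum_le_sum fun t _ => (hsub t).sub_le_inner u
  calc f ((T : ℝ)⁻¹ • ∑ t ∈ Icc 1 T, w t) - f u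
      ≤ (T : ℝ)⁻¹ * (∑ t ∈ Icc 1 T, f (w t) - T * f u) := by
        rw [mul_sub, inv_mul_cancel_left₀ hT0.ne']; linarith
    _ ≤ _ := by gcongr

end SubgradientDescent

lemma gradient_descent_bound_at_tuned_step {B ρ T : ℝ} (hB : 0 < B) (hρ : 0 < ρ) (hT : 0 < T) :
    (B ^ 2 / (2 * (B / (ρ * √T))) + B / (ρ * √T) * T * ρ ^ 2 / 2) / T = B * ρ / √T := by
  have hs2 : √T ^ 2 = T := Real.sq_sqrt hT.le
  field_simp
  rw [hs2]
  ring

lemma div_sqrt_le_of_sq_div_sq_le {a ε T : ℝ} (hε : 0 < ε) (hT : 0 < T)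
    (h : a ^ 2 / ε ^ 2 ≤ T) : a / √T ≤ ε := by
  have hle : a / ε ≤ √T := Real.le_sqrt_of_sq_le (by rwa [div_pow])
  rw [div_le_iff₀ (Real.sqrt_pos.2 hT)]
  rw [div_le_iff₀ hε] at hle
  linarith

theorem stmt8_general {d : ℕ} (f : EuclideanSpace ℝ (Fin d) → ℝ)
    (hconv : ConvexOn ℝ Set.univ f) (ρ B : ℝ) (hρ : 0 < ρ) (hB : 0 < B)
    (hlip : ∀ x y, |f x - f y| ≤ ρ * ‖x - y‖)
    (wstar : EuclideanSpace ℝ (Fin d)) (hwstar : ‖wstar‖ ≤ B)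
    (T : ℕ) (hT : 1 ≤ T)
    (η : ℝ) (hη : η = B / (ρ * Real.sqrt T))
    (w v : ℕ → EuclideanSpace ℝ (Fin d))
    (hw1 : w 1 = 0)
    (hrec : ∀ t, w (t + 1) = w t - η • v t)
    (hsub : ∀ t, ∀ u, f (w t) + ⟪v t, u - w t⟫ ≤ f u) :
    f ((T : ℝ)⁻¹ • ∑ t ∈ Finset.Icc 1 T, w t) - f wstar ≤ B * ρ / Real.sqrt T ∧
    ∀ ε > 0, B ^ 2 * ρ ^ 2 / ε ^ 2 ≤ (T : ℝ) →
      f ((T : ℝ)⁻¹ • ∑ t ∈ Finset.Icc 1 T, w t) - f wstar ≤ ε := by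
  have hT0 : (0 : ℝ) < T := by exact_mod_cast hT
  have hη0 : 0 < η := by rw [hη]; positivity
  have hv (t : ℕ) : ‖v t‖ ≤ ρ :=
    IsSubgradientAt.norm_le (hsub t) hρ.le fun y => (abs_le.mp (hlip y (w t))).2
  have hmain : f ((T : ℝ)⁻¹ • ∑ t ∈ Icc 1 T, w t) - f wstar ≤ B * ρ / √T := by
    calc _ ≤ (T : ℝ)⁻¹ * ∑ t ∈ Icc 1 T, ⟪v t, w t - wstar⟫ :=
          sub_le_average_inner_of_isSubgradientAt hconv hsub hT wstar
      _ ≤ (‖w 1 - wstar‖ ^ 2 / (2 * η) + η * T * ρ ^ 2 / 2) / T := by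
          rw [inv_mul_eq_div]
          gcongr
          exact sum_inner_le_of_gradient_descent hη0 hrec hv wstar T
      _ ≤ (B ^ 2 / (2 * η) + η * T * ρ ^ 2 / 2) / T := by
          rw [hw1, zero_sub, norm_neg]
          gcongr
      _ = B * ρ / √T := by
          rw [hη]
          exact gradient_descent_bound_at_tuned_step hB hρ hT0
  refine ⟨hmain, fun ε hε hTε => hmain.trans ?_⟩
  exact div_sqrt_le_of_sq_div_sq_le hε hT0 (by rwa [mul_pow])

theorem stmt8 {d : ℕ} (f : EuclideanSpace ℝ (Fin d) → ℝ)
    (hconv : ConvexOn ℝ Set.univ f) (ρ B : ℝ) (hρ : 0 < ρ) (hB : 0 < B)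
    (hlip : ∀ x y, |f x - f y| ≤ ρ * ‖x - y‖)
    (wstar : EuclideanSpace ℝ (Fin d)) (hwstar : ‖wstar‖ ≤ B)
    (hmin : ∀ u, ‖u‖ ≤ B → f wstar ≤ f u)
    (T : ℕ) (hT : 1 ≤ T)
    (η : ℝ) (hη : η = B / (ρ * Real.sqrt T))
    (w v : ℕ → EuclideanSpace ℝ (Fin d))
    (hw1 : w 1 = 0)
    (hrec : ∀ t, w (t + 1) = w t - η • v t)
    (hsub : ∀ t, ∀ u, f (w t) + ⟪v t, u - w t⟫ ≤ f u) :
    f ((T : ℝ)⁻¹ • ∑ t ∈ Finset.Icc 1 T, w t) - f wstar ≤ B * ρ / Real.sqrt T ∧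
    ∀ ε > 0, B ^ 2 * ρ ^ 2 / ε ^ 2 ≤ (T : ℝ) →
      f ((T : ℝ)⁻¹ • ∑ t ∈ Finset.Icc 1 T, w t) - f wstar ≤ ε :=
  stmt8_general f hconv ρ B hρ hB hlip wstar hwstar T hT η hη w v hw1 hrec hsub
end

section
/- Let f : ℝ^n → ℝ be differentiable with L-Lipschitz gradient, and suppose step sizes satisfy η_t → 0 and Σ_t η_t = ∞, with updates w_{t+1} = w_t + η_t·v_t where c₁·‖∇f(w_t)‖² ≤ −⟨∇f(w_t), v_t⟩ and ‖v_t‖ ≤ c₂·‖∇f(w_t)‖ for positive constants c₁, c₂. Then either f(w_t) → −∞, or f(w_t) converges to a finite value and ∇f(w_t) → 0 as t → ∞. -/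
/-!
With `L`-Lipschitz gradient, `f (x + η v) ≤ f x + η ⟪∇f x, v⟫ + L η² ‖v‖²`, so once
`η_t ≤ c₁ / (2 L c₂²)` every step decreases `f` by at least `(c₁ / 2) η_t ‖∇f(w_t)‖²`.
Hence `f (w_t)` is eventually antitone: either it tends to `-∞`, or it converges and
`∑ η_t ‖∇f(w_t)‖² < ∞`. In the second case `∑ η_t = ∞` forces `liminf ‖∇f(w_t)‖ = 0`, while the
Lipschitz bound gives `‖∇f(w_{t+1})‖² ≤ ‖∇f(w_t)‖² + K η_t ‖∇f(w_t)‖²`, whose increments are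
summable; a sequence with summable upward increments and liminf `0` tends to `0`.
-/

open RealInnerProductSpace Filter Topology

theorem tendsto_atBot_or_summable_of_le_sub {u s : ℕ → ℝ} {c : ℝ} (hc : 0 < c)
    (hs : ∀ t, 0 ≤ s t) (hstep : ∀ᶠ t in atTop, u (t + 1) ≤ u t - c * s t) :
    Tendsto u atTop atBot ∨ (∃ l, Tendsto u atTop (𝓝 l)) ∧ Summable s := by
  obtain ⟨T, hT⟩ := eventually_atTop.1 hstep
  have hstepT : ∀ k, u (k + 1 + T) ≤ u (k + T) - c * s (k + T) := fun k => by
    simpa only [add_right_comm] using hT (k + T) (Nat.le_add_left T k)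
  have hanti : Antitone fun k => u (k + T) :=
    antitone_nat_of_succ_le fun k => (hstepT k).trans (sub_le_self _ (by positivity [hs (k + T)]))
  rcases tendsto_atTop_of_antitone hanti with hbot | ⟨l, hl⟩
  · exact .inl ((tendsto_add_atTop_iff_nat T).1 hbot)
  refine .inr ⟨⟨l, (tendsto_add_atTop_iff_nat T).1 hl⟩, ?_⟩
  rw [← summable_nat_add_iff T]
  refine summable_of_sum_range_le (c := (u T - l) / c) (fun k => hs _) fun K => ?_
  have htele : ∑ k ∈ Finset.range K, c * s (k + T) ≤ u T - u (K + T) := by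
    have htel := Finset.sum_range_sub' (fun k => u (k + T)) K
    simp only [zero_add] at htel
    rw [← htel]
    exact Finset.sum_le_sum fun k _ => by linarith [hstepT k]
  rw [le_div_iff₀ hc, Finset.sum_mul]
  simp only [mul_comm _ c]
  linarith [hanti.le_of_tendsto hl K]

theorem frequently_lt_of_summable_mul {η q : ℕ → ℝ} (hη : ∀ t, 0 ≤ η t) (hdiv : ¬ Summable η)
    (hs : Summable fun t => η t * q t) {ε : ℝ} (hε : 0 < ε) : ∃ᶠ t in atTop, q t < ε := by
  by_contra hrare
  refine hdiv (.of_norm_bounded_eventually_nat (hs.div_const ε) ?_)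
  filter_upwards [not_frequently.1 hrare] with t ht
  rw [Real.norm_eq_abs, abs_of_nonneg (hη t), le_div_iff₀ hε]
  exact mul_le_mul_of_nonneg_left (not_lt.1 ht) (hη t)

theorem tendsto_zero_of_le_add_summable {a b : ℕ → ℝ} (ha : ∀ t, 0 ≤ a t) (hb : ∀ t, 0 ≤ b t)
    (hbs : Summable b) (hstep : ∀ᶠ t in atTop, a (t + 1) ≤ a t + b t)
    (hfreq : ∀ ε > 0, ∃ᶠ t in atTop, a t < ε) : Tendsto a atTop (𝓝 0) := by
  -- `a` plus the tail of `∑ b` is eventually antitone, so once it is small it stays small.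
  set r : ℕ → ℝ := fun t => a t + ∑' k, b (k + t)
  have htail : ∀ t, ∑' k, b (k + t) = b t + ∑' k, b (k + (t + 1)) := fun t => by
    rw [((summable_nat_add_iff t).2 hbs).tsum_eq_zero_add]
    simp only [zero_add, add_assoc, add_comm 1 t]
  have hle : ∀ t, a t ≤ r t := fun t => le_add_of_nonneg_right (tsum_nonneg fun k => hb _)
  obtain ⟨T, hT⟩ := eventually_atTop.1 hstep
  have hr : ∀ ε > 0, ∀ᶠ t in atTop, r t < ε := by
    intro ε hε
    have hsmall := ((hfreq (ε / 2) (half_pos hε)).and_eventually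
      ((tendsto_sum_nat_add b).eventually (gt_mem_nhds (half_pos hε)))).and_eventually
      (eventually_ge_atTop T)
    obtain ⟨m, ⟨ham, hbm⟩, hTm⟩ := hsmall.exists
    refine eventually_atTop.2 ⟨m, fun t hmt => ?_⟩
    induction t, hmt using Nat.le_induction with
    | base => simp only [r]; linarith
    | succ t hmt ih =>
      have := hT t (hTm.trans hmt)
      simp only [r] at ih ⊢
      linarith [htail t]
  refine tendsto_order.2 ⟨fun ε hε => .of_forall fun t => hε.trans_le (ha t), fun ε hε => ?_⟩
  filter_upwards [hr ε hε] with t ht using (hle t).trans_lt ht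

section Descent

variable {E : Type*} [NormedAddCommGroup E] [InnerProductSpace ℝ E] [CompleteSpace E]
  {f : E → ℝ} {L : ℝ}

theorem le_add_inner_gradient_add_sq_of_lipschitz_gradient (hf : Differentiable ℝ f)
    (hL : 0 ≤ L) (hlip : ∀ w w', ‖gradient f w - gradient f w'‖ ≤ L * ‖w - w'‖) (x y : E) :
    f y ≤ f x + ⟪gradient f x, y - x⟫ + L * ‖y - x‖ ^ 2 := by
  set φ : E → ℝ := fun z => f z - ⟪gradient f x, z⟫
  have hφ : ∀ z, HasFDerivAt φ (InnerProductSpace.toDual ℝ E (gradient f z - gradient f x)) z := by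
    intro z
    rw [map_sub]
    exact (hasGradientAt_iff_hasFDerivAt.1 (hf z).hasGradientAt).sub
      ((InnerProductSpace.toDual ℝ E (gradient f x)).hasFDerivAt)
  have hbound : ∀ z ∈ Metric.closedBall x ‖y - x‖,
      ‖InnerProductSpace.toDual ℝ E (gradient f z - gradient f x)‖ ≤ L * ‖y - x‖ := by
    intro z hz
    rw [LinearIsometryEquiv.norm_map]
    exact (hlip z x).trans (mul_le_mul_of_nonneg_left (mem_closedBall_iff_norm.1 hz) hL)
  have hmvt := (convex_closedBall x ‖y - x‖).norm_image_sub_le_of_norm_hasFDerivWithin_le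
    (fun z _ => (hφ z).hasFDerivWithinAt) hbound (Metric.mem_closedBall_self (norm_nonneg _))
    (mem_closedBall_iff_norm.2 le_rfl)
  have hφyx : φ y - φ x = f y - f x - ⟪gradient f x, y - x⟫ := by
    simp only [φ, inner_sub_right]; ring
  rw [hφyx, Real.norm_eq_abs] at hmvt
  linarith [le_abs_self (f y - f x - ⟪gradient f x, y - x⟫)]

variable {x v : E} {η c₁ c₂ : ℝ}

theorem apply_add_smul_le_of_descent_direction (hf : Differentiable ℝ f) (hL : 0 ≤ L)
    (hlip : ∀ w w', ‖gradient f w - gradient f w'‖ ≤ L * ‖w - w'‖) (hη : 0 ≤ η)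
    (hηc : η * (2 * L * c₂ ^ 2) ≤ c₁) (hdesc : c₁ * ‖gradient f x‖ ^ 2 ≤ -⟪gradient f x, v⟫)
    (hnorm : ‖v‖ ≤ c₂ * ‖gradient f x‖) :
    f (x + η • v) ≤ f x - c₁ / 2 * (η * ‖gradient f x‖ ^ 2) := by
  have htaylor := le_add_inner_gradient_add_sq_of_lipschitz_gradient hf hL hlip x (x + η • v)
  rw [add_sub_cancel_left, real_inner_smul_right, norm_smul, Real.norm_eq_abs,
    abs_of_nonneg hη] at htaylor
  have hv : ‖v‖ ^ 2 ≤ c₂ ^ 2 * ‖gradient f x‖ ^ 2 := by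
    rw [← mul_pow]; exact pow_le_pow_left₀ (norm_nonneg v) hnorm 2
  have hquad : L * (η * ‖v‖) ^ 2 ≤ c₁ / 2 * (η * ‖gradient f x‖ ^ 2) := by
    calc L * (η * ‖v‖) ^ 2 ≤ L * η ^ 2 * (c₂ ^ 2 * ‖gradient f x‖ ^ 2) := by
          rw [mul_pow, ← mul_assoc]; gcongr
      _ = η * (2 * L * c₂ ^ 2) * (η * ‖gradient f x‖ ^ 2) / 2 := by ring
      _ ≤ c₁ * (η * ‖gradient f x‖ ^ 2) / 2 := by gcongr
      _ = c₁ / 2 * (η * ‖gradient f x‖ ^ 2) := by ring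
  nlinarith [mul_le_mul_of_nonneg_left hdesc hη]

theorem sq_norm_gradient_add_smul_le (hL : 0 ≤ L)
    (hlip : ∀ w w', ‖gradient f w - gradient f w'‖ ≤ L * ‖w - w'‖)
    (hη : 0 ≤ η) (hη₁ : η ≤ 1) (hnorm : ‖v‖ ≤ c₂ * ‖gradient f x‖) :
    ‖gradient f (x + η • v)‖ ^ 2 ≤
      ‖gradient f x‖ ^ 2 + L * c₂ * (2 + L * c₂) * (η * ‖gradient f x‖ ^ 2) := by
  have hlin : ‖gradient f (x + η • v)‖ ≤ (1 + L * c₂ * η) * ‖gradient f x‖ := by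
    calc ‖gradient f (x + η • v)‖
        ≤ ‖gradient f x‖ + ‖gradient f (x + η • v) - gradient f x‖ := norm_le_insert' _ _
      _ ≤ ‖gradient f x‖ + L * (η * (c₂ * ‖gradient f x‖)) := by
          grw [hlip, add_sub_cancel_left, norm_smul, Real.norm_eq_abs, abs_of_nonneg hη, hnorm]
      _ = (1 + L * c₂ * η) * ‖gradient f x‖ := by ring
  have hsq : (L * c₂ * η) ^ 2 ≤ (L * c₂) ^ 2 * η := by
    rw [mul_pow]; gcongr; nlinarith
  calc ‖gradient f (x + η • v)‖ ^ 2 ≤ ((1 + L * c₂ * η) * ‖gradient f x‖) ^ 2 := by gcongr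
    _ = ‖gradient f x‖ ^ 2 + (2 * (L * c₂ * η) + (L * c₂ * η) ^ 2) * ‖gradient f x‖ ^ 2 := by ring
    _ ≤ ‖gradient f x‖ ^ 2 + (2 * (L * c₂ * η) + (L * c₂) ^ 2 * η) * ‖gradient f x‖ ^ 2 := by gcongr
    _ = _ := by ring

end Descent

theorem stmt13 {n : ℕ} (f : EuclideanSpace ℝ (Fin n) → ℝ)
    (hf : Differentiable ℝ f) (L : ℝ) (hL : 0 < L)
    (hlip : ∀ w w', ‖gradient f w - gradient f w'‖ ≤ L * ‖w - w'‖)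
    (η : ℕ → ℝ) (hη_pos : ∀ t, 0 < η t)
    (hη_to_zero : Tendsto η atTop (nhds 0))
    (hη_div : Tendsto (fun N => ∑ t ∈ Finset.range N, η t) atTop atTop)
    (c₁ c₂ : ℝ) (hc₁ : 0 < c₁) (hc₂ : 0 < c₂)
    (w v : ℕ → EuclideanSpace ℝ (Fin n))
    (hrec : ∀ t, w (t + 1) = w t + η t • v t)
    (hdesc : ∀ t, c₁ * ‖gradient f (w t)‖ ^ 2 ≤ -⟪gradient f (w t), v t⟫)
    (hnorm : ∀ t, ‖v t‖ ≤ c₂ * ‖gradient f (w t)‖) :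
    Tendsto (fun t => f (w t)) atTop atBot ∨
      ((∃ a : ℝ, Tendsto (fun t => f (w t)) atTop (nhds a)) ∧
        Tendsto (fun t => gradient f (w t)) atTop (nhds 0)) := by
  have hη_small : ∀ᶠ t in atTop, η t * (2 * L * c₂ ^ 2) ≤ c₁ ∧ η t ≤ 1 := by
    have h := hη_to_zero.mul_const (2 * L * c₂ ^ 2)
    rw [zero_mul] at h
    exact (h.eventually (ge_mem_nhds hc₁)).and (hη_to_zero.eventually (ge_mem_nhds one_pos))
  have hdecrease : ∀ᶠ t in atTop,
      f (w (t + 1)) ≤ f (w t) - c₁ / 2 * (η t * ‖gradient f (w t)‖ ^ 2) := by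
    filter_upwards [hη_small] with t ht
    rw [hrec]
    exact apply_add_smul_le_of_descent_direction hf hL.le hlip (hη_pos t).le ht.1 (hdesc t)
      (hnorm t)
  have hgrowth : ∀ᶠ t in atTop, ‖gradient f (w (t + 1))‖ ^ 2 ≤
      ‖gradient f (w t)‖ ^ 2 + L * c₂ * (2 + L * c₂) * (η t * ‖gradient f (w t)‖ ^ 2) := by
    filter_upwards [hη_small] with t ht
    rw [hrec]
    exact sq_norm_gradient_add_smul_le hL.le hlip (hη_pos t).le ht.2 (hnorm t)
  have hs_nonneg : ∀ t, 0 ≤ η t * ‖gradient f (w t)‖ ^ 2 := fun t =>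
    mul_nonneg (hη_pos t).le (sq_nonneg _)
  have hK : 0 ≤ L * c₂ * (2 + L * c₂) := by positivity
  refine (tendsto_atBot_or_summable_of_le_sub (half_pos hc₁) hs_nonneg hdecrease).imp_right
    fun ⟨hconv, hsum⟩ => ⟨hconv, ?_⟩
  have hη_not_summable : ¬ Summable η := fun hη =>
    not_tendsto_atTop_of_tendsto_nhds hη.hasSum.tendsto_sum_nat hη_div
  have hsq : Tendsto (fun t => ‖gradient f (w t)‖ ^ 2) atTop (𝓝 0) :=
    tendsto_zero_of_le_add_summable (fun t => by positivity) (fun t => mul_nonneg hK (hs_nonneg t))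
      (hsum.mul_left _) hgrowth
      fun ε hε => frequently_lt_of_summable_mul (fun t => (hη_pos t).le) hη_not_summable hsum hε
  refine tendsto_zero_iff_norm_tendsto_zero.2 ?_
  simpa only [Real.sqrt_sq (norm_nonneg _), Real.sqrt_zero] using hsq.sqrt
end
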